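/- Let S ~ Gamma(U,1) with U a positive integer, α > 2, δ = 2/α, and θ > 0. Then ∫_{ℝ²} (1 − E[e^{−θ(S/U)|x|^{−α}}]) dx = π δ (θ/U)^δ ∑_{k=0}^{U−1} C(U,k) B(k+δ, U−k−δ), where B is the Beta function and C(U,k) the binomial coefficient. -/

import Mathlib

/-!
Polar coordinates reduce the integral to `2π ∫₀^∞ y (1 - E[exp(-c S y^(-α))]) dy` with
`c = θ/U`. The Laplace transform of the Gamma law, `E[exp(-c t S)] = (1 + c t)^(-U)`, turns the
integrand into `y (1 - (y^α / (y^α + c))^U)`, which the binomial theorem expands as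
`∑_{k<U} C(U,k) c^(U-k) y^(αk+1) (y^α + c)^(-U)`. The substitutions `t = y^α`, `t = c u` and
`u = x / (1 - x)` turn each term into the Beta integral `B(k + δ, U - k - δ)`; both arguments are
positive because `δ = 2/α < 1`.
-/

open MeasureTheory ProbabilityTheory Finset

noncomputable def betaFn (a b : ℝ) : ℝ := Real.Gamma a * Real.Gamma b / Real.Gamma (a + b)

open Real Set

section Beta

variable {a b : ℝ}

lemma ofReal_cpow_mul_one_sub_cpow {x : ℝ} (hx : x ∈ Ioo (0 : ℝ) 1) :
    (x : ℂ) ^ ((a : ℂ) - 1) * (1 - (x : ℂ)) ^ ((b : ℂ) - 1)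
      = ((x ^ (a - 1) * (1 - x) ^ (b - 1) : ℝ) : ℂ) := by
  rw [Complex.ofReal_mul, Complex.ofReal_cpow hx.1.le, Complex.ofReal_cpow (sub_nonneg.2 hx.2.le)]
  push_cast
  rfl

lemma integrableOn_rpow_mul_one_sub_rpow (ha : 0 < a) (hb : 0 < b) :
    IntegrableOn (fun x : ℝ => x ^ (a - 1) * (1 - x) ^ (b - 1)) (Ioo 0 1) := by
  have h := (Complex.betaIntegral_convergent (u := a) (v := b) (by simpa) (by simpa)).1
  refine IntegrableOn.congr_fun (h.mono_set Ioo_subset_Ioc_self).re (fun x hx => ?_)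
    measurableSet_Ioo
  simp only [ofReal_cpow_mul_one_sub_cpow hx, RCLike.re_to_complex, Complex.ofReal_re]

lemma integral_rpow_mul_one_sub_rpow (ha : 0 < a) (hb : 0 < b) :
    ∫ x in Ioo (0 : ℝ) 1, x ^ (a - 1) * (1 - x) ^ (b - 1) = betaFn a b := by
  rw [show betaFn a b = beta a b from rfl, beta_eq_betaIntegralReal a b ha hb,
    Complex.betaIntegral, intervalIntegral.integral_of_le zero_le_one,
    integral_Ioc_eq_integral_Ioo, setIntegral_congr_fun measurableSet_Ioo
      fun x hx => ofReal_cpow_mul_one_sub_cpow hx, integral_complex_ofReal, Complex.ofReal_re]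

lemma bijOn_div_one_sub : BijOn (fun x : ℝ => x / (1 - x)) (Ioo 0 1) (Ioi 0) := by
  refine InvOn.bijOn (f' := fun u => u / (1 + u)) ⟨fun x hx => ?_, fun u (hu : 0 < u) => ?_⟩
    (fun x hx => div_pos hx.1 (sub_pos.2 hx.2))
    (fun u (hu : 0 < u) => ⟨by positivity, (div_lt_one (by positivity)).2 (by linarith)⟩)
  · have : 1 - x ≠ 0 := (sub_pos.2 hx.2).ne'
    field_simp
    ring
  · have : 1 + u ≠ 0 := by positivity
    field_simp
    ring

lemma hasDerivWithinAt_div_one_sub {x : ℝ} (hx : x ∈ Ioo (0 : ℝ) 1) :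
    HasDerivWithinAt (fun x : ℝ => x / (1 - x)) ((1 - x) ^ 2)⁻¹ (Ioo 0 1) x := by
  have h := (hasDerivAt_id x).div ((hasDerivAt_id x).const_sub 1) (sub_pos.2 hx.2).ne'
  exact h.hasDerivWithinAt.congr_deriv (by simp only [id]; ring)

lemma abs_deriv_div_one_sub_smul {x : ℝ} (hx : x ∈ Ioo (0 : ℝ) 1) :
    |((1 - x) ^ 2)⁻¹| • ((x / (1 - x)) ^ (a - 1) * (1 + x / (1 - x)) ^ (-(a + b)))
      = x ^ (a - 1) * (1 - x) ^ (b - 1) := by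
  have hx1 : 0 < 1 - x := sub_pos.2 hx.2
  have h1 : 1 + x / (1 - x) = (1 - x)⁻¹ := by field_simp; ring
  have h2 : ((1 - x) ^ 2)⁻¹ = (1 - x) ^ (-2 : ℝ) := by
    rw [rpow_neg hx1.le, ← rpow_natCast]; norm_num
  rw [h1, h2, abs_of_pos (by positivity), smul_eq_mul, div_rpow hx.1.le hx1.le, inv_rpow hx1.le,
    ← rpow_neg hx1.le, neg_neg, div_eq_mul_inv, ← rpow_neg hx1.le,
    show b - 1 = -2 + (-(a - 1) + (a + b)) by ring]
  simp only [rpow_add hx1]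
  ring

lemma integrableOn_rpow_mul_one_add_rpow_Ioi (ha : 0 < a) (hb : 0 < b) :
    IntegrableOn (fun u : ℝ => u ^ (a - 1) * (1 + u) ^ (-(a + b))) (Ioi 0) := by
  rw [← bijOn_div_one_sub.image_eq, integrableOn_image_iff_integrableOn_abs_deriv_smul
    measurableSet_Ioo (fun _ => hasDerivWithinAt_div_one_sub) bijOn_div_one_sub.injOn]
  exact (integrableOn_rpow_mul_one_sub_rpow ha hb).congr_fun
    (fun x hx => (abs_deriv_div_one_sub_smul hx).symm) measurableSet_Ioo

lemma integral_rpow_mul_one_add_rpow_Ioi (ha : 0 < a) (hb : 0 < b) :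
    ∫ u in Ioi (0 : ℝ), u ^ (a - 1) * (1 + u) ^ (-(a + b)) = betaFn a b := by
  rw [← bijOn_div_one_sub.image_eq, integral_image_eq_integral_abs_deriv_smul
    measurableSet_Ioo (fun _ => hasDerivWithinAt_div_one_sub) bijOn_div_one_sub.injOn,
    setIntegral_congr_fun measurableSet_Ioo fun _ => abs_deriv_div_one_sub_smul,
    integral_rpow_mul_one_sub_rpow ha hb]

end Beta

section ScaledBeta

variable {a b c : ℝ}

lemma rpow_mul_add_rpow_comp_mul_left (hc : 0 < c) {u : ℝ} (hu : 0 < u) :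
    (c * u) ^ (a - 1) * (c * u + c) ^ (-(a + b))
      = c ^ (-b - 1) * (u ^ (a - 1) * (1 + u) ^ (-(a + b))) := by
  rw [show c * u + c = c * (1 + u) by ring, mul_rpow hc.le hu.le, mul_rpow hc.le (by positivity),
    show -b - 1 = a - 1 + -(a + b) by ring, rpow_add hc]
  ring

lemma integrableOn_rpow_mul_add_rpow_Ioi (ha : 0 < a) (hb : 0 < b) (hc : 0 < c) :
    IntegrableOn (fun t : ℝ => t ^ (a - 1) * (t + c) ^ (-(a + b))) (Ioi 0) := by
  have h : IntegrableOn (fun u : ℝ => (c * u) ^ (a - 1) * (c * u + c) ^ (-(a + b))) (Ioi 0) :=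
    IntegrableOn.congr_fun ((integrableOn_rpow_mul_one_add_rpow_Ioi ha hb).const_mul _)
      (fun u hu => (rpow_mul_add_rpow_comp_mul_left hc hu).symm) measurableSet_Ioi
  simpa using (integrableOn_Ioi_comp_mul_left_iff
    (fun t : ℝ => t ^ (a - 1) * (t + c) ^ (-(a + b))) 0 hc).1 h

lemma integral_rpow_mul_add_rpow_Ioi (ha : 0 < a) (hb : 0 < b) (hc : 0 < c) :
    ∫ t in Ioi (0 : ℝ), t ^ (a - 1) * (t + c) ^ (-(a + b)) = c ^ (-b) * betaFn a b :=
  calc ∫ t in Ioi (0 : ℝ), t ^ (a - 1) * (t + c) ^ (-(a + b))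
      = c • ∫ u in Ioi (0 : ℝ), (c * u) ^ (a - 1) * (c * u + c) ^ (-(a + b)) := by
        rw [integral_comp_mul_left_Ioi (fun t : ℝ => t ^ (a - 1) * (t + c) ^ (-(a + b))) 0 hc,
          mul_zero, smul_smul, mul_inv_cancel₀ hc.ne', one_smul]
    _ = c * (c ^ (-b - 1) * betaFn a b) := by
        rw [setIntegral_congr_fun measurableSet_Ioi fun _ => rpow_mul_add_rpow_comp_mul_left hc,
          integral_const_mul, integral_rpow_mul_one_add_rpow_Ioi ha hb, smul_eq_mul]
    _ = c ^ (-b) * betaFn a b := by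
        rw [← mul_assoc, ← rpow_one_add' hc.le (by linarith), add_sub_cancel]

end ScaledBeta

section PowerSubstitution

variable {α a b c : ℝ}

lemma rpow_sub_one_mul_rpow_mul_add_rpow_comp_rpow {y : ℝ} (hy : 0 < y) :
    y ^ (α - 1) * ((y ^ α) ^ (a - 1) * (y ^ α + c) ^ (-(a + b)))
      = y ^ (α * a - 1) * (y ^ α + c) ^ (-(a + b)) := by
  rw [← rpow_mul hy.le, ← mul_assoc, ← rpow_add hy, show α - 1 + α * (a - 1) = α * a - 1 by ring]

lemma integrableOn_rpow_mul_rpow_add_rpow_Ioi (hα : 0 < α) (ha : 0 < a) (hb : 0 < b)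
    (hc : 0 < c) :
    IntegrableOn (fun y : ℝ => y ^ (α * a - 1) * (y ^ α + c) ^ (-(a + b))) (Ioi 0) := by
  refine IntegrableOn.congr_fun ?_ (fun y hy => rpow_sub_one_mul_rpow_mul_add_rpow_comp_rpow hy)
    measurableSet_Ioi
  exact (integrableOn_Ioi_comp_rpow_iff' _ hα.ne').2 (integrableOn_rpow_mul_add_rpow_Ioi ha hb hc)

lemma integral_rpow_mul_rpow_add_rpow_Ioi (hα : 0 < α) (ha : 0 < a) (hb : 0 < b) (hc : 0 < c) :
    ∫ y in Ioi (0 : ℝ), y ^ (α * a - 1) * (y ^ α + c) ^ (-(a + b))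
      = α⁻¹ * c ^ (-b) * betaFn a b :=
  calc ∫ y in Ioi (0 : ℝ), y ^ (α * a - 1) * (y ^ α + c) ^ (-(a + b))
      = α⁻¹ * ∫ y in Ioi (0 : ℝ),
          (α * y ^ (α - 1)) • ((y ^ α) ^ (a - 1) * (y ^ α + c) ^ (-(a + b))) := by
        rw [← integral_const_mul]
        refine setIntegral_congr_fun measurableSet_Ioi fun y hy => ?_
        rw [smul_eq_mul, mul_assoc, rpow_sub_one_mul_rpow_mul_add_rpow_comp_rpow hy,
          inv_mul_cancel_left₀ hα.ne']
    _ = α⁻¹ * c ^ (-b) * betaFn a b := by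
        rw [integral_comp_rpow_Ioi_of_pos
            (g := fun t : ℝ => t ^ (a - 1) * (t + c) ^ (-(a + b))) hα,
          integral_rpow_mul_add_rpow_Ioi ha hb hc, mul_assoc]

end PowerSubstitution

lemma integral_exp_neg_mul_gammaMeasure {a r c : ℝ} (ha : 0 < a) (hr : 0 < r)
    (hrc : 0 < r + c) :
    ∫ s, exp (-(c * s)) ∂gammaMeasure a r = (r / (r + c)) ^ a := by
  have hpdf (s : ℝ) : (gammaPDF a r s).toReal = gammaPDFReal a r s :=
    ENNReal.toReal_ofReal (gammaPDFReal_nonneg ha hr s)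
  have hIoi (s : ℝ) (hs : s ∈ Set.Ioi 0) : gammaPDFReal a r s * exp (-(c * s))
      = r ^ a / Gamma a * (s ^ (a - 1) * exp (-((r + c) * s))) := by
    rw [gammaPDFReal, if_pos (le_of_lt hs), mul_assoc, mul_assoc, ← exp_add]
    ring_nf
  rw [gammaMeasure, integral_withDensity_eq_integral_toReal_smul (f := gammaPDF a r)
      (measurable_gammaPDFReal a r).ennreal_ofReal (ae_of_all _ fun _ => ENNReal.ofReal_lt_top)]
  simp only [hpdf, smul_eq_mul]
  rw [← setIntegral_eq_integral_of_forall_compl_eq_zero (s := Ici 0) fun s hs => by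
      rw [gammaPDFReal, if_neg (show ¬ 0 ≤ s from hs), zero_mul],
    integral_Ici_eq_integral_Ioi, setIntegral_congr_fun measurableSet_Ioi hIoi,
    integral_const_mul, integral_rpow_mul_exp_neg_mul_Ioi ha hrc, div_rpow hr.le hrc.le,
    div_rpow zero_le_one hrc.le, one_rpow]
  field_simp [(Gamma_pos_of_pos ha).ne']

lemma one_sub_div_pow_eq_sum {K : Type*} [Field K] {t c : K} (h : t + c ≠ 0) (n : ℕ) :
    1 - (t / (t + c)) ^ n
      = ∑ k ∈ range n, (n.choose k : K) * c ^ (n - k) * t ^ k / (t + c) ^ n := by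
  rw [div_pow, one_sub_div (pow_ne_zero _ h), ← sum_div]
  congr 1
  rw [add_pow, sum_range_succ]
  simp only [Nat.sub_self, pow_zero, Nat.choose_self, Nat.cast_one, mul_one, add_sub_cancel_right]
  exact sum_congr rfl fun k _ => by ring

lemma mul_one_sub_integral_exp_gammaMeasure {U : ℕ} (hU : 0 < U) {α c y : ℝ} (hc : 0 < c)
    (hy : 0 < y) :
    y * (1 - ∫ s, exp (-(c * y ^ (-α) * s)) ∂gammaMeasure U 1)
      = ∑ k ∈ range U,
          (U.choose k : ℝ) * c ^ (U - k) * (y ^ (α * k + 1) * (y ^ α + c) ^ (-(U : ℝ))) := by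
  have ht : 0 < y ^ α := rpow_pos_of_pos hy α
  have hratio : 1 / (1 + c * y ^ (-α)) = y ^ α / (y ^ α + c) := by
    rw [rpow_neg hy.le]
    field_simp
  rw [integral_exp_neg_mul_gammaMeasure (Nat.cast_pos.2 hU) one_pos (by positivity), hratio,
    rpow_natCast, one_sub_div_pow_eq_sum (by positivity), mul_sum]
  refine sum_congr rfl fun k _ => ?_
  rw [rpow_neg (by positivity), rpow_natCast, rpow_add_one hy.ne', rpow_mul hy.le, rpow_natCast]
  ring

lemma integral_mul_one_sub_integral_exp_gammaMeasure {U : ℕ} (hU : 0 < U) {α c : ℝ} (hα : 2 < α)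
    (hc : 0 < c) :
    ∫ y in Ioi (0 : ℝ), y * (1 - ∫ s, exp (-(c * y ^ (-α) * s)) ∂gammaMeasure U 1)
      = α⁻¹ * c ^ (2 / α) *
          ∑ k ∈ range U, (U.choose k : ℝ) * betaFn (k + 2 / α) (U - k - 2 / α) := by
  have hα0 : 0 < α := by linarith
  have ha (k : ℕ) : 0 < (k : ℝ) + 2 / α := by positivity
  have hb {k : ℕ} (hk : k < U) : 0 < (U : ℝ) - k - 2 / α := by
    have : (k : ℝ) + 1 ≤ U := by exact_mod_cast hk
    have : 2 / α < 1 := (div_lt_one hα0).2 (by linarith)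
    linarith
  have hterm (k : ℕ) : (fun y : ℝ => y ^ (α * k + 1) * (y ^ α + c) ^ (-(U : ℝ)))
      = fun y =>
          y ^ (α * (k + 2 / α) - 1) * (y ^ α + c) ^ (-((k + 2 / α) + (U - k - 2 / α))) := by
    funext y
    rw [mul_add, mul_div_cancel₀ _ hα0.ne']
    congr 2 <;> ring
  rw [setIntegral_congr_fun measurableSet_Ioi fun y hy =>
      mul_one_sub_integral_exp_gammaMeasure hU hc hy,
    integral_finsetSum _ fun k hk => ?_, mul_sum]
  · refine sum_congr rfl fun k hk => ?_
    have hk := mem_range.1 hk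
    rw [integral_const_mul, hterm, integral_rpow_mul_rpow_add_rpow_Ioi hα0 (ha k) (hb hk) hc,
      ← rpow_natCast, Nat.cast_sub hk.le]
    have hpow : c ^ ((U : ℝ) - k) * c ^ (-((U : ℝ) - k - 2 / α)) = c ^ (2 / α) := by
      rw [← rpow_add hc]
      congr 1
      ring
    rw [← hpow]
    ring
  · have h : IntegrableOn (fun y : ℝ => y ^ (α * k + 1) * (y ^ α + c) ^ (-(U : ℝ))) (Ioi 0) := by
      rw [hterm]
      exact integrableOn_rpow_mul_rpow_add_rpow_Ioi hα0 (ha k) (hb (mem_range.1 hk)) hc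
    exact h.const_mul _

lemma integral_fun_norm_euclideanSpace_fin_two {F : Type*} [NormedAddCommGroup F]
    [NormedSpace ℝ F] (f : ℝ → F) :
    ∫ x : EuclideanSpace ℝ (Fin 2), f ‖x‖ = (2 * π) • ∫ y in Ioi (0 : ℝ), y • f y := by
  rw [integral_fun_norm_addHaar volume f, finrank_euclideanSpace_fin, Measure.real,
    EuclideanSpace.volume_ball_fin_two]
  norm_num [ENNReal.toReal_ofReal pi_nonneg, mul_smul, ofNat_smul_eq_nsmul]

/-- for `S ~ Gamma(U,1)` (`U` a positive integer), `α > 2`,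
`δ = 2/α`, `θ > 0`,
`∫_{ℝ²} (1 − E[e^{−θ(S/U)|x|^{−α}}]) dx
  = π δ (θ/U)^δ ∑_{k=0}^{U−1} C(U,k) B(k+δ, U−k−δ)`. -/
theorem shot_noise_integral (U : ℕ) (hU : 1 ≤ U) (α θ : ℝ) (hα : 2 < α) (hθ : 0 < θ) :
    ∫ x : EuclideanSpace ℝ (Fin 2),
        (1 - ∫ s : ℝ, Real.exp (-θ * (s / U) * ‖x‖ ^ (-α)) ∂(gammaMeasure U 1))
      = Real.pi * (2 / α) * (θ / U) ^ (2 / α) *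
          ∑ k ∈ Finset.range U, (Nat.choose U k : ℝ) *
            betaFn ((k : ℝ) + 2 / α) ((U : ℝ) - k - 2 / α) := by
  have hexp (y s : ℝ) : -θ * (s / U) * y ^ (-α) = -(θ / U * y ^ (-α) * s) := by ring
  simp_rw [hexp]
  rw [integral_fun_norm_euclideanSpace_fin_two
      (fun y => 1 - ∫ s, exp (-(θ / U * y ^ (-α) * s)) ∂gammaMeasure U 1)]
  simp only [smul_eq_mul]
  rw [integral_mul_one_sub_integral_exp_gammaMeasure hU hα (by positivity)]
  ring
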